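/- Let n be a positive integer and a₀ a nonzero complex number. Let p be analytic on the open unit disk 𝔻 with p(0) = a₀, with vanishing derivatives of orders 1, …, n−1 at 0, and with p(z) ≠ 0 for all z ∈ 𝔻. Suppose there exists z₀ ∈ 𝔻 with z₀ ≠ 0 and |p(z₀)| < |a₀| such that |p(z₀)| = min_{|z| ≤ |z₀|} |p(z)|. Then p'(z₀) ≠ 0 and Re( z₀·p''(z₀)/p'(z₀) ) + 1 ≥ Re( z₀·p'(z₀)/p(z₀) ). -/

import Mathlib

/-!
Write `r = |z₀|`. The function `p(z₀)/p` maps the disc `|z| < r` into the closed unit disc,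
takes the value `1` at `z₀` and a value `b` with `|b| < 1` at `0`. Composing it with the disc
automorphism sending `b` to `0`, Schwarz's lemma bounds the result by `s` at `s z₀`, while it
has modulus `1` at `z₀`. So it cannot have zero derivative there, and hence neither can `p`.

For the inequality, `t ↦ |p(z₀ e^{it})|²` has a minimum at `t = 0` and `s ↦ |p(s z₀)|²` has one
on `[0, 1]` at `s = 1`. With `P = p(z₀)`, `Q = z₀ p'(z₀)`, `R = z₀² p''(z₀)`, the first and
second order conditions say that `Q / P` is a nonpositive real number and
`Re (conj P (Q + R)) ≤ |Q|²`; dividing the latter by `Q conj P < 0` gives the claim.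
-/

open Metric Complex ComplexConjugate Set Filter Topology

noncomputable def blaschkeFactor (b w : ℂ) : ℂ := (w - b) / (1 - conj b * w)

lemma normSq_one_sub_conj_mul_sub_normSq_sub (b w : ℂ) :
    normSq (1 - conj b * w) - normSq (w - b) = (1 - normSq b) * (1 - normSq w) := by
  simp only [normSq_apply, mul_re, mul_im, sub_re, sub_im, conj_re, conj_im, one_re, one_im]
  ring

lemma one_sub_conj_mul_ne_zero {b w : ℂ} (hb : ‖b‖ < 1) (hw : ‖w‖ ≤ 1) :
    1 - conj b * w ≠ 0 := by
  have : ‖conj b * w‖ < 1 := by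
    rw [norm_mul, Complex.norm_conj]
    nlinarith [norm_nonneg b, norm_nonneg w]
  intro h
  rw [← sub_eq_zero.1 h, norm_one] at this
  exact lt_irrefl _ this

lemma norm_blaschkeFactor_le_one {b w : ℂ} (hb : ‖b‖ < 1) (hw : ‖w‖ ≤ 1) :
    ‖blaschkeFactor b w‖ ≤ 1 := by
  rw [blaschkeFactor, norm_div, div_le_one (norm_pos_iff.2 (one_sub_conj_mul_ne_zero hb hw)),
    ← sq_le_sq₀ (norm_nonneg _) (norm_nonneg _), ← normSq_eq_norm_sq, ← normSq_eq_norm_sq,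
    ← sub_nonneg, normSq_one_sub_conj_mul_sub_normSq_sub, normSq_eq_norm_sq, normSq_eq_norm_sq]
  apply mul_nonneg <;> nlinarith [norm_nonneg b, norm_nonneg w]

lemma norm_blaschkeFactor_of_norm_eq_one {b w : ℂ} (hb : ‖b‖ < 1) (hw : ‖w‖ = 1) :
    ‖blaschkeFactor b w‖ = 1 := by
  rw [blaschkeFactor, norm_div, div_eq_one_iff_eq (norm_ne_zero_iff.2
    (one_sub_conj_mul_ne_zero hb hw.le)), ← sq_eq_sq₀ (norm_nonneg _) (norm_nonneg _),
    ← normSq_eq_norm_sq, ← normSq_eq_norm_sq, ← sub_eq_zero,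
    ← neg_eq_zero, neg_sub, normSq_one_sub_conj_mul_sub_normSq_sub, normSq_eq_norm_sq w, hw]
  ring

lemma blaschkeFactor_self (b : ℂ) : blaschkeFactor b b = 0 := by
  simp [blaschkeFactor]

lemma differentiableAt_blaschkeFactor {b w : ℂ} (hb : ‖b‖ < 1) (hw : ‖w‖ ≤ 1) :
    DifferentiableAt ℂ (blaschkeFactor b) w :=
  ((differentiableAt_id.sub_const b).div ((differentiableAt_const _).sub
    (differentiableAt_id.const_mul _)) (one_sub_conj_mul_ne_zero hb hw))

lemma eq_zero_of_hasDerivAt_zero_of_norm_le_mul {E : Type*} [NormedAddCommGroup E]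
    [NormedSpace ℝ E] {g : ℝ → E} (hg : HasDerivAt g 0 1)
    (hle : ∀ s ∈ Ioo (0 : ℝ) 1, ‖g s‖ ≤ s * ‖g 1‖) : g 1 = 0 := by
  rw [← norm_le_zero_iff]
  refine le_of_forall_pos_le_add fun ε hε => ?_
  have hsmall : ∀ᶠ s in 𝓝[<] (1 : ℝ), ‖g s - g 1‖ ≤ ε * ‖s - 1‖ :=
    nhdsWithin_le_nhds ((hasDerivAt_iff_isLittleO.1 hg).def hε |>.mono fun s hs => by
      simpa using hs)
  obtain ⟨s, hs_small, hs⟩ := (hsmall.and (Ioo_mem_nhdsLT zero_lt_one)).exists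
  have h1s : 0 < 1 - s := sub_pos.2 hs.2
  have : (1 - s) * ‖g 1‖ ≤ (1 - s) * ε := by
    calc (1 - s) * ‖g 1‖ ≤ ‖g 1‖ - ‖g s‖ := by linarith [hle s hs]
      _ ≤ ‖g s - g 1‖ := by rw [norm_sub_rev]; exact norm_sub_norm_le _ _
      _ ≤ ε * ‖s - 1‖ := hs_small
      _ = (1 - s) * ε := by rw [Real.norm_eq_abs, abs_sub_comm, abs_of_pos h1s, mul_comm]
  linarith [le_of_mul_le_mul_left this h1s]

lemma HasDerivAt.comp_ofReal_mul {f : ℂ → ℂ} {f' z₀ w : ℂ} {s : ℝ} (hf : HasDerivAt f f' w)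
    (hw : w = s * z₀) : HasDerivAt (fun t : ℝ => f (t * z₀)) (f' * z₀) s :=
  (hf.comp_of_eq _ (hasDerivAt_mul_const z₀) hw).comp_ofReal

theorem deriv_ne_zero_of_mapsTo_closedBall_one {f : ℂ → ℂ} {z₀ : ℂ}
    (hd : DifferentiableOn ℂ f (ball 0 ‖z₀‖)) (hf : DifferentiableAt ℂ f z₀)
    (hmaps : MapsTo f (ball 0 ‖z₀‖) (closedBall 0 1)) (h0 : ‖f 0‖ < 1) (h1 : ‖f z₀‖ = 1) :
    deriv f z₀ ≠ 0 := by
  intro hf'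
  set G := blaschkeFactor (f 0) ∘ f
  have hmaps_norm : ∀ z ∈ ball 0 ‖z₀‖, ‖f z‖ ≤ 1 := fun z hz => by
    simpa using hmaps hz
  have hG_maps : MapsTo G (ball 0 ‖z₀‖) (closedBall (G 0) 1) := fun z hz => by
    simpa [G, blaschkeFactor_self] using norm_blaschkeFactor_le_one h0 (hmaps_norm z hz)
  have hG_diff : DifferentiableOn ℂ G (ball 0 ‖z₀‖) := fun z hz =>
    ((differentiableAt_blaschkeFactor h0 (hmaps_norm z hz)).comp z
      (hd.differentiableAt (isOpen_ball.mem_nhds hz))).differentiableWithinAt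
  have hG_deriv : HasDerivAt G 0 z₀ := by
    simpa [hf'] using (differentiableAt_blaschkeFactor h0 h1.le).hasDerivAt.comp z₀ hf.hasDerivAt
  have hG_one : ‖G ((1 : ℝ) * z₀)‖ = 1 := by
    simpa [G] using norm_blaschkeFactor_of_norm_eq_one h0 h1
  have hr : 0 < ‖z₀‖ := norm_pos_iff.2 (by rintro rfl; linarith)
  have hG_radial : ∀ s ∈ Ioo (0 : ℝ) 1, ‖G (s * z₀)‖ ≤ s * ‖G ((1 : ℝ) * z₀)‖ := by
    intro s hs
    have hmem : (s : ℂ) * z₀ ∈ ball 0 ‖z₀‖ := by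
      simpa [norm_mul, abs_of_pos hs.1] using mul_lt_of_lt_one_left hr hs.2
    have hG0 : G 0 = 0 := blaschkeFactor_self _
    have := dist_le_div_mul_dist_of_mapsTo_ball hG_diff hG_maps hmem
    rw [hG_one, mul_one]
    rwa [hG0, dist_zero_right, dist_zero_right, norm_mul, norm_real, Real.norm_of_nonneg hs.1.le,
      one_div_mul_eq_div, mul_div_cancel_right₀ _ hr.ne'] at this
  have hG_zero := eq_zero_of_hasDerivAt_zero_of_norm_le_mul (g := fun s : ℝ => G (s * z₀))
    (by simpa using hG_deriv.comp_ofReal_mul (s := 1) (by simp)) hG_radial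
  rw [hG_zero, norm_zero] at hG_one
  exact zero_ne_one hG_one

theorem deriv_ne_zero_of_isMinOn_norm {p : ℂ → ℂ} {z₀ : ℂ} {r : ℝ}
    (hp : DifferentiableOn ℂ p (ball 0 r)) (hz₀ : ‖z₀‖ < r) (hne : ∀ z ∈ ball 0 r, p z ≠ 0)
    (hmin : IsMinOn (‖p ·‖) (closedBall 0 ‖z₀‖) z₀) (h0 : ‖p z₀‖ < ‖p 0‖) :
    deriv p z₀ ≠ 0 := by
  have hsub : closedBall (0 : ℂ) ‖z₀‖ ⊆ ball 0 r := closedBall_subset_ball hz₀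
  have hpz₀ : p z₀ ≠ 0 := hne z₀ (hsub (by simp))
  have hp_z₀ : DifferentiableAt ℂ p z₀ :=
    hp.differentiableAt (isOpen_ball.mem_nhds (hsub (by simp)))
  set F : ℂ → ℂ := fun z => p z₀ / p z
  have hF_diff : DifferentiableOn ℂ F (ball 0 ‖z₀‖) :=
    ((differentiableOn_const _).div hp hne).mono (ball_subset_ball hz₀.le)
  have hF_maps : MapsTo F (ball 0 ‖z₀‖) (closedBall 0 1) := fun z hz => by
    have hpz : p z ≠ 0 := hne z (hsub (ball_subset_closedBall hz))
    simpa [F, norm_div, div_le_one (norm_pos_iff.2 hpz)] using hmin (ball_subset_closedBall hz)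
  intro hp'
  have hF_deriv : HasDerivAt F 0 z₀ := by
    simpa [F, div_eq_mul_inv, hp'] using (hp_z₀.hasDerivAt.inv hpz₀).const_mul (p z₀)
  refine deriv_ne_zero_of_mapsTo_closedBall_one hF_diff hF_deriv.differentiableAt hF_maps ?_ ?_
    hF_deriv.deriv
  · have hp0 : p 0 ≠ 0 := hne 0 (hsub (by simp))
    simpa [F, norm_div, div_lt_one (norm_pos_iff.2 hp0)] using h0
  · simp [F, hpz₀]

theorem IsLocalMin.deriv_deriv_nonneg {u : ℝ → ℝ} {a : ℝ} (h : IsLocalMin u a)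
    (hc : ContinuousAt u a) : 0 ≤ deriv (deriv u) a := by
  by_contra! hneg
  -- A strict second-order maximum contradicts the minimum unless `u` is locally constant.
  have hmax := isLocalMax_of_deriv_deriv_neg hneg h.deriv_eq_zero hc
  have hconst : u =ᶠ[𝓝 a] fun _ => u a :=
    (h.and hmax).mono fun t ht => le_antisymm ht.2 ht.1
  have := hconst.deriv.deriv_eq
  simp only [deriv_const'] at this
  simp [this] at hneg

section Curve

variable {F : Type*} [NormedAddCommGroup F] [InnerProductSpace ℝ F]

open scoped RealInnerProductSpace

lemma inner_deriv_eq_zero_of_isLocalMin_norm {g : ℝ → F} {g' : F} {a : ℝ}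
    (hg : HasDerivAt g g' a) (hmin : IsLocalMin (‖g ·‖) a) : ⟪g a, g'⟫ = 0 := by
  have hmin_sq : IsLocalMin (‖g ·‖ ^ 2) a :=
    hmin.mono fun t ht => pow_le_pow_left₀ (norm_nonneg _) ht 2
  simpa using hmin_sq.hasDerivAt_eq_zero hg.norm_sq

lemma inner_deriv_nonpos_of_isMinOn_norm_Icc {g : ℝ → F} {g' : F} {a b : ℝ} (hba : b < a)
    (hg : HasDerivAt g g' a) (hmin : IsMinOn (‖g ·‖) (Icc b a) a) : ⟪g a, g'⟫ ≤ 0 := by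
  have hmin_sq : IsLocalMinOn (‖g ·‖ ^ 2) (Icc b a) a :=
    IsMinOn.localize fun t ht => pow_le_pow_left₀ (norm_nonneg _) (hmin ht) 2
  have hdir : b - a ∈ posTangentConeAt (Icc b a) a := sub_mem_posTangentConeAt_of_segment_subset
    ((convex_Icc b a).segment_subset (right_mem_Icc.2 hba.le) (left_mem_Icc.2 hba.le))
  have := hmin_sq.hasFDerivWithinAt_nonneg hg.norm_sq.hasFDerivAt.hasFDerivWithinAt hdir
  rw [ContinuousLinearMap.toSpanSingleton_apply, smul_eq_mul] at this
  nlinarith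

lemma inner_deriv_deriv_add_norm_sq_nonneg_of_isLocalMin_norm {g g' : ℝ → F} {g'' : F} {a : ℝ}
    (hg : ∀ t, HasDerivAt g (g' t) t) (hg' : HasDerivAt g' g'' a)
    (hmin : IsLocalMin (‖g ·‖) a) : 0 ≤ ⟪g a, g''⟫ + ‖g' a‖ ^ 2 := by
  have hmin_sq : IsLocalMin (‖g ·‖ ^ 2) a :=
    hmin.mono fun t ht => pow_le_pow_left₀ (norm_nonneg _) ht 2
  have hderiv : deriv (‖g ·‖ ^ 2) = fun t => 2 * ⟪g t, g' t⟫ :=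
    funext fun t => (hg t).norm_sq.deriv
  have := hmin_sq.deriv_deriv_nonneg ((hg a).continuousAt.norm.pow 2)
  rw [hderiv, (((hg a).inner ℝ hg').const_mul 2).deriv, real_inner_self_eq_norm_sq] at this
  linarith

end Curve

open scoped RealInnerProductSpace in
lemma re_div_le_re_div_add_one {P Q R : ℂ} (hP : P ≠ 0) (htan : ⟪P, I * Q⟫ = 0)
    (hrad : ⟪P, Q⟫ ≤ 0) (hsecond : 0 ≤ ⟪P, -(Q + R)⟫ + ‖I * Q‖ ^ 2) :
    (Q / P).re ≤ (R / Q).re + 1 := by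
  rcases eq_or_ne Q 0 with rfl | hQ
  · simp
  obtain ⟨w, rfl⟩ : ∃ w, Q = w * P := ⟨Q / P, (div_mul_cancel₀ Q hP).symm⟩
  obtain ⟨v, rfl⟩ : ∃ v, R = v * (w * P) := ⟨R / (w * P), (div_mul_cancel₀ R hQ).symm⟩
  rw [mul_div_cancel_right₀ w hP, mul_div_cancel_right₀ v hQ]
  have hinner : ∀ X : ℂ, ⟪P, X * P⟫ = normSq P * X.re := fun X => by
    rw [Complex.inner, mul_assoc, mul_conj, mul_comm, re_ofReal_mul]
  have hPsq : 0 < normSq P := normSq_pos.2 hP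
  rw [← mul_assoc, hinner, mul_re, I_re, I_im] at htan
  rw [hinner] at hrad
  rw [show -(w * P + v * (w * P)) = -(w + v * w) * P by ring, hinner, norm_mul, norm_mul, norm_I,
    one_mul, mul_pow, ← normSq_eq_norm_sq, ← normSq_eq_norm_sq] at hsecond
  have hw_im : w.im = 0 := by nlinarith
  have hw_re : w.re < 0 := by
    refine lt_of_le_of_ne (nonpos_of_mul_nonpos_right hrad hPsq) fun h => ?_
    exact left_ne_zero_of_mul hQ (Complex.ext h hw_im)
  rw [normSq_apply w, neg_re, add_re, mul_re, hw_im] at hsecond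
  have h : 0 ≤ w.re * (w.re - 1 - v.re) :=
    (mul_nonneg_iff_of_pos_left hPsq).1 (by linarith)
  nlinarith

lemma HasDerivAt.comp_mul_exp_ofReal_mul_I {f : ℂ → ℂ} {f' z₀ : ℂ} {t : ℝ}
    (hf : HasDerivAt f f' (z₀ * cexp (t * I))) :
    HasDerivAt (fun s : ℝ => f (z₀ * cexp (s * I))) (f' * (I * (z₀ * cexp (t * I)))) t := by
  have hγ : HasDerivAt (fun w : ℂ => z₀ * cexp (w * I)) (I * (z₀ * cexp (t * I))) t :=
    (((hasDerivAt_mul_const I).cexp).const_mul z₀).congr_deriv (by ring)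
  exact (hf.comp_of_eq _ hγ rfl).comp_ofReal

theorem re_mul_deriv_div_le_of_isMinOn_norm {p : ℂ → ℂ} {z₀ : ℂ} {r : ℝ}
    (hp : DifferentiableOn ℂ p (ball 0 r)) (hz₀ : ‖z₀‖ < r)
    (hmin : IsMinOn (‖p ·‖) (closedBall 0 ‖z₀‖) z₀) (hpz₀ : p z₀ ≠ 0) :
    (z₀ * deriv p z₀ / p z₀).re ≤ (z₀ * deriv (deriv p) z₀ / deriv p z₀).re + 1 := by
  have hp_an : AnalyticOnNhd ℂ p (ball 0 r) := hp.analyticOnNhd isOpen_ball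
  have hsub : closedBall (0 : ℂ) ‖z₀‖ ⊆ ball 0 r := closedBall_subset_ball hz₀
  have hp_deriv : ∀ z ∈ closedBall (0 : ℂ) ‖z₀‖, HasDerivAt p (deriv p z) z := fun z hz =>
    (hp_an z (hsub hz)).differentiableAt.hasDerivAt
  have hz₀_mem : z₀ ∈ closedBall (0 : ℂ) ‖z₀‖ := by simp
  set γ : ℝ → ℂ := fun t => z₀ * cexp (t * I)
  have hγ_mem : ∀ t, γ t ∈ closedBall 0 ‖z₀‖ := fun t => by
    simp [γ, norm_exp_ofReal_mul_I]
  have hγ0 : γ 0 = z₀ := by simp [γ]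
  have hcircle : ∀ t, HasDerivAt (fun s => p (γ s)) (deriv p (γ t) * (I * γ t)) t :=
    fun t => (hp_deriv _ (hγ_mem t)).comp_mul_exp_ofReal_mul_I
  have hcircle' : HasDerivAt (fun s => deriv p (γ s) * (I * γ s))
      (-(z₀ * deriv p z₀ + z₀ * (z₀ * deriv (deriv p) z₀))) 0 := by
    have h1 : HasDerivAt (fun s => deriv p (γ s)) _ 0 :=
      HasDerivAt.comp_mul_exp_ofReal_mul_I
        (hγ0 ▸ (hp_an.deriv z₀ (hsub hz₀_mem)).differentiableAt.hasDerivAt)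
    have h2 := ((hasDerivAt_id (γ 0)).comp_mul_exp_ofReal_mul_I).const_mul I
    refine (h1.mul h2).congr_deriv ?_
    simp only [hγ0, id, ofReal_zero, zero_mul, exp_zero, mul_one, one_mul]
    linear_combination (z₀ * deriv p z₀ + z₀ * (z₀ * deriv (deriv p) z₀)) * I_sq
  have hmin_circle : IsLocalMin (fun t => ‖p (γ t)‖) 0 :=
    Filter.Eventually.of_forall fun t => by simpa [hγ0] using hmin (hγ_mem t)
  have hradial : HasDerivAt (fun s : ℝ => p (s * z₀)) (deriv p z₀ * z₀) 1 :=
    (hp_deriv z₀ hz₀_mem).comp_ofReal_mul (by simp)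
  have hmin_radial : IsMinOn (fun s : ℝ => ‖p (s * z₀)‖) (Icc 0 1) 1 := fun s hs => by
    simpa using hmin (show (s : ℂ) * z₀ ∈ closedBall 0 ‖z₀‖ by
      simpa [norm_mul, abs_of_nonneg hs.1] using mul_le_of_le_one_left (norm_nonneg z₀) hs.2)
  have htan := inner_deriv_eq_zero_of_isLocalMin_norm (hcircle 0) hmin_circle
  have hrad := inner_deriv_nonpos_of_isMinOn_norm_Icc zero_lt_one hradial hmin_radial
  have hsecond := inner_deriv_deriv_add_norm_sq_nonneg_of_isLocalMin_norm hcircle hcircle'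
    hmin_circle
  have hQ : deriv p (γ 0) * (I * γ 0) = I * (z₀ * deriv p z₀) := by rw [hγ0]; ring
  rw [hQ] at htan hsecond
  simp only [hγ0, ofReal_one, one_mul] at htan hrad hsecond
  rw [mul_comm] at hrad
  convert re_div_le_re_div_add_one hpz₀ htan hrad hsecond using 3
  rcases eq_or_ne z₀ 0 with rfl | hz₀
  · simp
  · exact (mul_div_mul_left _ _ hz₀).symm

theorem shiraishi_owa_second_deriv_bound_general
    (a₀ : ℂ)
    (p : ℂ → ℂ)
    (hp : DifferentiableOn ℂ p (ball (0 : ℂ) 1))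
    (hp0 : p 0 = a₀)
    (hne : ∀ z ∈ ball (0 : ℂ) 1, p z ≠ 0)
    (z₀ : ℂ) (hz₀ : z₀ ∈ ball (0 : ℂ) 1)
    (hlt : ‖p z₀‖ < ‖a₀‖)
    (hmin : ∀ z ∈ closedBall (0 : ℂ) ‖z₀‖,
      ‖p z₀‖ ≤ ‖p z‖) :
    deriv p z₀ ≠ 0 ∧
    (z₀ * deriv (deriv p) z₀ / deriv p z₀).re + 1 ≥
      (z₀ * deriv p z₀ / p z₀).re := by
  have hz₀_lt : ‖z₀‖ < 1 := by simpa using hz₀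
  have hmin_on : IsMinOn (‖p ·‖) (closedBall 0 ‖z₀‖) z₀ := hmin
  exact ⟨deriv_ne_zero_of_isMinOn_norm hp hz₀_lt hne hmin_on (hp0 ▸ hlt),
    re_mul_deriv_div_le_of_isMinOn_norm hp hz₀_lt hmin_on (hne z₀ hz₀)⟩

/-- Under the Shiraishi–Owa hypotheses, `p'(z₀) ≠ 0` and
`Re(z₀ p''(z₀)/p'(z₀)) + 1 ≥ Re(z₀ p'(z₀)/p(z₀))`. -/
theorem shiraishi_owa_second_deriv_bound
    (n : ℕ) (hn : 0 < n) (a₀ : ℂ) (ha₀ : a₀ ≠ 0)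
    (p : ℂ → ℂ)
    (hp : DifferentiableOn ℂ p (ball (0 : ℂ) 1))
    (hp0 : p 0 = a₀)
    (hder : ∀ k : ℕ, 1 ≤ k → k ≤ n - 1 → iteratedDeriv k p 0 = 0)
    (hne : ∀ z ∈ ball (0 : ℂ) 1, p z ≠ 0)
    (z₀ : ℂ) (hz₀ : z₀ ∈ ball (0 : ℂ) 1) (hz₀ne : z₀ ≠ 0)
    (hlt : ‖p z₀‖ < ‖a₀‖)
    (hmin : ∀ z ∈ closedBall (0 : ℂ) ‖z₀‖,
      ‖p z₀‖ ≤ ‖p z‖) :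
    deriv p z₀ ≠ 0 ∧
    (z₀ * deriv (deriv p) z₀ / deriv p z₀).re + 1 ≥
      (z₀ * deriv p z₀ / p z₀).re :=
  shiraishi_owa_second_deriv_bound_general a₀ p hp hp0 hne z₀ hz₀ hlt hmin
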